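/- Suppose a family G_k(a,b,q) of formal power series (indexed by colored integers k) satisfies the eight q-difference equations (eq1)–(eq8) of Lemma 3.2 for all k ≥ 1, together with the initial conditions G_{1_{ab}} = 1, G_{1_a} = 1 + aq, G_{1_{b²}} = 1 + aq, G_{1_b} = 1 + aq + bq, G_{2_{ab}} = 1 + aq + bq + abq², G_{2_a} = 1 + aq + bq + abq² + aq², G_{3_{a²}} = 1 + aq + bq + abq² + aq² + a²q³, G_{2_b} = 1 + aq + bq + abq² + aq² + a²q³ + bq² + abq³. Then for all k ≥ 1: G_{(2k+1)_{ab}}(a,b,q) = (1+aq)·G_{(2k)_a}(b, aq, q), G_{(2k+1)_{b²}}(a,b,q) = (1+aq)·G_{(2k)_b}(b, aq, q), G_{(2k+2)_{ab}}(a,b,q) = (1+aq)·G_{(2k+1)_a}(b, aq, q), and G_{(2k+1)_{a²}}(a,b,q) = (1+aq)·G_{(2k−1)_b}(b, aq, q). -/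

import Mathlib

/-- The five colours a, b, ab, a², b². -/
inductive Col where
  | a | b | ab | aa | bb
deriving DecidableEq, Inhabited

open MvPowerSeries

/-- The substitution F(a,b,q) ↦ F(b,aq,q) on formal power series in
a = X 0, b = X 1, q = X 2: coefficient of aᵁbⱽqᴺ in F(b,aq,q) is the
coefficient of aⱽbᵁq^{N-U} in F (and 0 if U > N). -/
noncomputable def swapSub (F : MvPowerSeries (Fin 3) ℚ) : MvPowerSeries (Fin 3) ℚ :=
  fun e => if e 0 ≤ e 2 then
    MvPowerSeries.coeff
      (Finsupp.single 0 (e 1) + Finsupp.single 1 (e 0) + Finsupp.single 2 (e 2 - e 0)) F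
  else 0

/-!
Write `S` for the substitution `F(a, b, q) ↦ F(b, aq, q)`. It is additive and turns
multiplication by `a`, `b`, `q` into multiplication by `b`, `aq`, `q`, so applying it to
(eq1)–(eq8) gives the recurrences satisfied by the substituted series. The four relations are
proved together, in the order `(2k)_{ab} < (2k+1)_{a²} < (2k+1)_{ab} < (2k+1)_{b²} < (2k+2)_{ab}`
of the coloured integers: each one is a linear combination of the original and substituted
equations and of the relations already obtained. The common ingredient is (eq2) rewritten by the relations for `(2k)_{ab}` and
`(2k+1)_{ab}`, namely `G_{(2k+1)_a} = (1 + aq) (S G_{(2k)_a} + a q^{2k+1} S G_{(2k-1)_a})`. The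
relation for `(2k+3)_{a²}` also needs the key equation
`G_{(2k+3)_{a²}} = G_{(2k+2)_{ab}} + a q^{2k+2} G_{(2k+1)_{ab}} + a² q^{2k+3} G_{(2k)_{ab}}`,
which follows from (eq1), (eq6)–(eq8) and, at the lowest level, from the initial conditions.
-/

open Finsupp

theorem Finsupp.le_iff_fin_three (f g : Fin 3 →₀ ℕ) :
    f ≤ g ↔ f 0 ≤ g 0 ∧ f 1 ≤ g 1 ∧ f 2 ≤ g 2 := by
  simp [Finsupp.le_def, Fin.forall_fin_succ]

section swapSub

variable (F : MvPowerSeries (Fin 3) ℚ)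

theorem coeff_swapSub (e : Fin 3 →₀ ℕ) :
    coeff e (swapSub F) = if e 0 ≤ e 2 then
      coeff (single 0 (e 1) + single 1 (e 0) + single 2 (e 2 - e 0)) F else 0 := rfl

theorem swapSub_add (F' : MvPowerSeries (Fin 3) ℚ) :
    swapSub (F + F') = swapSub F + swapSub F' := by
  ext e
  simp only [coeff_swapSub, map_add]
  split_ifs <;> simp

theorem swapSub_one : swapSub (1 : MvPowerSeries (Fin 3) ℚ) = 1 := by
  ext e
  rw [coeff_swapSub, coeff_one, coeff_one]
  split_ifs <;> simp_all [Finsupp.ext_iff, Fin.forall_fin_succ]; omega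

-- `a^i b^j q^k ↦ b^i (aq)^j q^k`
noncomputable def swapExp (n : Fin 3 →₀ ℕ) : Fin 3 →₀ ℕ :=
  single 0 (n 1) + single 1 (n 0) + single 2 (n 1 + n 2)

theorem swapSub_monomial_mul (n : Fin 3 →₀ ℕ) (c : ℚ) :
    swapSub (monomial n c * F) = monomial (swapExp n) c * swapSub F := by
  ext e
  simp only [coeff_swapSub, coeff_monomial_mul, Finsupp.le_iff_fin_three, swapExp, coe_add,
    coe_tsub, Pi.add_apply, Pi.sub_apply, single_apply, Fin.reduceEq, if_true, if_false]
  split_ifs <;> (try simp only [mul_zero]) <;> try omega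
  refine congrArg (fun m => c * coeff m F) (Finsupp.ext fun i => ?_)
  fin_cases i <;> simp
  omega

noncomputable def swapImage : Fin 3 → MvPowerSeries (Fin 3) ℚ
  | 0 => X 1
  | 1 => X 0 * X 2
  | 2 => X 2

theorem swapSub_X_pow_mul (i : Fin 3) (m : ℕ) :
    swapSub (X i ^ m * F) = swapImage i ^ m * swapSub F := by
  rw [X_pow_eq, swapSub_monomial_mul]
  congr 1
  fin_cases i <;> simp [swapExp, swapImage, mul_pow, X_pow_eq, monomial_mul_monomial]

theorem swapSub_X_mul (i : Fin 3) : swapSub (X i * F) = swapImage i * swapSub F := by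
  simpa using swapSub_X_pow_mul F i 1

theorem swapSub_X_pow (i : Fin 3) (m : ℕ) : swapSub (X i ^ m) = swapImage i ^ m := by
  simpa [swapSub_one] using swapSub_X_pow_mul 1 i m

theorem swapSub_X (i : Fin 3) : swapSub (X i) = swapImage i := by
  simpa using swapSub_X_pow i 1

end swapSub

/-- Equation `eqi` is the paper's (eqi) at `k = n + 1`, so that no truncated `2 * k - 1` occurs. -/
structure QDiffSystem (G : ℕ × Col → MvPowerSeries (Fin 3) ℚ) : Prop where
  eq1 : ∀ n : ℕ, G (2*n+3, Col.ab) =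
    G (2*n+2, Col.b) + X 0 * X 1 * X 2 ^ (2*n+3) * G (2*n+1, Col.a)
  eq2 : ∀ n : ℕ, G (2*n+3, Col.a) =
    G (2*n+3, Col.ab) + X 0 * X 2 ^ (2*n+3) * G (2*n+2, Col.ab)
  eq3 : ∀ n : ℕ, G (2*n+3, Col.bb) =
    G (2*n+3, Col.a) + X 1 ^ 2 * X 2 ^ (2*n+3) * G (2*n+1, Col.a)
  eq4 : ∀ n : ℕ, G (2*n+3, Col.b) =
    G (2*n+3, Col.bb) + X 1 * X 2 ^ (2*n+3) * G (2*n+2, Col.a)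
  eq5 : ∀ n : ℕ, G (2*n+4, Col.ab) =
    G (2*n+3, Col.b) + X 0 * X 1 * X 2 ^ (2*n+4) * G (2*n+2, Col.a) +
      X 0 * X 1 ^ 2 * X 2 ^ (4*n+6) * G (2*n+1, Col.a)
  eq6 : ∀ n : ℕ, G (2*n+4, Col.a) =
    G (2*n+4, Col.ab) + X 0 * X 2 ^ (2*n+4) * G (2*n+2, Col.a) +
      X 0 * X 1 * X 2 ^ (4*n+6) * G (2*n+1, Col.a)
  eq7 : ∀ n : ℕ, G (2*n+5, Col.aa) =
    G (2*n+4, Col.a) + X 0 ^ 2 * X 2 ^ (2*n+5) * G (2*n+2, Col.a) +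
      X 0 ^ 2 * X 1 * X 2 ^ (4*n+7) * G (2*n+1, Col.a)
  eq8 : ∀ n : ℕ, G (2*n+4, Col.b) =
    G (2*n+5, Col.aa) + X 1 * X 2 ^ (2*n+4) * G (2*n+3, Col.a)

def EvenLevelRelation (G : ℕ × Col → MvPowerSeries (Fin 3) ℚ) (n : ℕ) : Prop :=
  (1 + X 0 * X 2) * G (2*n+2, Col.a) + X 1 * X 2 ^ (2*n+2) * G (2*n+1, Col.a) =
    G (2*n+2, Col.b) + X 0 * X 2 * G (2*n+2, Col.ab)

theorem evenLevelRelation_zero {G : ℕ × Col → MvPowerSeries (Fin 3) ℚ}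
    (i2 : G (1, Col.a) = 1 + X 0 * X 2)
    (i5 : G (2, Col.ab) = 1 + X 0 * X 2 + X 1 * X 2 + X 0 * X 1 * X 2 ^ 2)
    (i6 : G (2, Col.a) = 1 + X 0 * X 2 + X 1 * X 2 + X 0 * X 1 * X 2 ^ 2 + X 0 * X 2 ^ 2)
    (i8 : G (2, Col.b) = 1 + X 0 * X 2 + X 1 * X 2 + X 0 * X 1 * X 2 ^ 2 + X 0 * X 2 ^ 2
      + X 0 ^ 2 * X 2 ^ 3 + X 1 * X 2 ^ 2 + X 0 * X 1 * X 2 ^ 3) :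
    EvenLevelRelation G 0 := by
  unfold EvenLevelRelation
  linear_combination (1 + X 0 * X 2) * i6 + X 1 * X 2 ^ 2 * i2 - i8 - X 0 * X 2 * i5

def SwapRelations (G : ℕ × Col → MvPowerSeries (Fin 3) ℚ) (n : ℕ) : Prop :=
  G (2*n+2, Col.ab) = (1 + X 0 * X 2) * swapSub (G (2*n+1, Col.a)) ∧
  G (2*n+3, Col.aa) = (1 + X 0 * X 2) * swapSub (G (2*n+1, Col.b)) ∧
  G (2*n+3, Col.ab) = (1 + X 0 * X 2) * swapSub (G (2*n+2, Col.a)) ∧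
  G (2*n+3, Col.bb) = (1 + X 0 * X 2) * swapSub (G (2*n+2, Col.b)) ∧
  G (2*n+4, Col.ab) = (1 + X 0 * X 2) * swapSub (G (2*n+3, Col.a))

namespace QDiffSystem

variable {G : ℕ × Col → MvPowerSeries (Fin 3) ℚ}

theorem evenLevelRelation (hG : QDiffSystem G) (h₀ : EvenLevelRelation G 0) :
    ∀ n, EvenLevelRelation G n
  | 0 => h₀
  | n + 1 => by
    unfold EvenLevelRelation
    linear_combination X 0 * X 2 * hG.eq6 n - hG.eq7 n - hG.eq8 n

theorem key_equation (hG : QDiffSystem G) (h₀ : EvenLevelRelation G 0) (n : ℕ) :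
    G (2*n+5, Col.aa) = G (2*n+4, Col.ab) + X 0 * X 2 ^ (2*n+4) * G (2*n+3, Col.ab) +
      X 0 ^ 2 * X 2 ^ (2*n+5) * G (2*n+2, Col.ab) := by
  have hB := hG.evenLevelRelation h₀ n
  unfold EvenLevelRelation at hB
  linear_combination hG.eq7 n + hG.eq6 n + X 0 * X 2 ^ (2*n+4) * (hB - hG.eq1 n)

section step

variable (n : ℕ)

theorem a_odd_eq_swap (hG : QDiffSystem G)
    (hP₁ : G (2*n+2, Col.ab) = (1 + X 0 * X 2) * swapSub (G (2*n+1, Col.a)))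
    (hP₂ : G (2*n+3, Col.ab) = (1 + X 0 * X 2) * swapSub (G (2*n+2, Col.a))) :
    G (2*n+3, Col.a) = (1 + X 0 * X 2) *
      (swapSub (G (2*n+2, Col.a)) + X 0 * X 2 ^ (2*n+3) * swapSub (G (2*n+1, Col.a))) := by
  linear_combination hG.eq2 n + hP₂ + X 0 * X 2 ^ (2*n+3) * hP₁

theorem aa_eq_swap (hG : QDiffSystem G) (h₀ : EvenLevelRelation G 0)
    (hP₁ : G (2*n+2, Col.ab) = (1 + X 0 * X 2) * swapSub (G (2*n+1, Col.a)))
    (hP₂ : G (2*n+3, Col.ab) = (1 + X 0 * X 2) * swapSub (G (2*n+2, Col.a)))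
    (hP₃ : G (2*n+4, Col.ab) = (1 + X 0 * X 2) * swapSub (G (2*n+3, Col.a))) :
    G (2*n+5, Col.aa) = (1 + X 0 * X 2) * swapSub (G (2*n+3, Col.b)) := by
  have s₃ := congrArg swapSub (hG.eq3 n)
  have s₄ := congrArg swapSub (hG.eq4 n)
  simp only [mul_assoc, swapSub_add, swapSub_X_mul, swapSub_X_pow_mul, swapImage] at s₃ s₄
  linear_combination hG.key_equation h₀ n + hP₃ + X 0 * X 2 ^ (2*n+4) * hP₂ +
    X 0 ^ 2 * X 2 ^ (2*n+5) * hP₁ - (1 + X 0 * X 2) * (s₃ + s₄)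

theorem ab_odd_eq_swap (hG : QDiffSystem G)
    (hH : G (2*n+3, Col.a) = (1 + X 0 * X 2) *
      (swapSub (G (2*n+2, Col.a)) + X 0 * X 2 ^ (2*n+3) * swapSub (G (2*n+1, Col.a))))
    (hD : G (2*n+5, Col.aa) = (1 + X 0 * X 2) * swapSub (G (2*n+3, Col.b))) :
    G (2*n+5, Col.ab) = (1 + X 0 * X 2) * swapSub (G (2*n+4, Col.a)) := by
  have s₅ := congrArg swapSub (hG.eq5 n)
  have s₆ := congrArg swapSub (hG.eq6 n)
  simp only [mul_assoc, swapSub_add, swapSub_X_mul, swapSub_X_pow_mul, swapImage] at s₅ s₆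
  linear_combination hG.eq1 (n+1) + hG.eq8 n + hD - (1 + X 0 * X 2) * (s₅ + s₆) +
    X 1 * X 2 ^ (2*n+4) * (1 + X 0 * X 2) * hH

theorem bb_eq_swap (hG : QDiffSystem G)
    (hH : G (2*n+3, Col.a) = (1 + X 0 * X 2) *
      (swapSub (G (2*n+2, Col.a)) + X 0 * X 2 ^ (2*n+3) * swapSub (G (2*n+1, Col.a))))
    (hP₃ : G (2*n+4, Col.ab) = (1 + X 0 * X 2) * swapSub (G (2*n+3, Col.a)))
    (hP₄ : G (2*n+5, Col.ab) = (1 + X 0 * X 2) * swapSub (G (2*n+4, Col.a))) :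
    G (2*n+5, Col.bb) = (1 + X 0 * X 2) * swapSub (G (2*n+4, Col.b)) := by
  have s₇ := congrArg swapSub (hG.eq7 n)
  have s₈ := congrArg swapSub (hG.eq8 n)
  simp only [mul_assoc, swapSub_add, swapSub_X_mul, swapSub_X_pow_mul, swapImage] at s₇ s₈
  linear_combination hG.eq3 (n+1) + hG.eq2 (n+1) + hP₄ + X 0 * X 2 ^ (2*n+5) * hP₃ -
    (1 + X 0 * X 2) * (s₇ + s₈) + X 1 ^ 2 * X 2 ^ (2*n+5) * hH

theorem ab_even_eq_swap (hG : QDiffSystem G)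
    (hH : G (2*n+3, Col.a) = (1 + X 0 * X 2) *
      (swapSub (G (2*n+2, Col.a)) + X 0 * X 2 ^ (2*n+3) * swapSub (G (2*n+1, Col.a))))
    (hD : G (2*n+5, Col.aa) = (1 + X 0 * X 2) * swapSub (G (2*n+3, Col.b)))
    (hP₃ : G (2*n+4, Col.ab) = (1 + X 0 * X 2) * swapSub (G (2*n+3, Col.a)))
    (hB : G (2*n+5, Col.bb) = (1 + X 0 * X 2) * swapSub (G (2*n+4, Col.b))) :
    G (2*n+6, Col.ab) = (1 + X 0 * X 2) * swapSub (G (2*n+5, Col.a)) := by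
  have s₁ := congrArg swapSub (hG.eq1 (n+1))
  have s₂ := congrArg swapSub (hG.eq2 (n+1))
  have s₅ := congrArg swapSub (hG.eq5 n)
  simp only [mul_assoc, swapSub_add, swapSub_X_mul, swapSub_X_pow_mul, swapImage] at s₁ s₂ s₅
  linear_combination hG.eq5 (n+1) + hG.eq4 (n+1) + hB - (1 + X 0 * X 2) * (s₂ + s₁) -
    X 1 * X 2 ^ (2*n+5) * (hG.eq7 n - X 0 * X 2 * hG.eq6 n) + X 1 * X 2 ^ (2*n+5) * hD +
    X 0 * X 1 ^ 2 * X 2 ^ (4*n+10) * hH - X 1 * X 2 ^ (2*n+5) * (1 + X 0 * X 2) * s₅ +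
    X 0 * X 1 * X 2 ^ (2*n+6) * hP₃

end step

theorem swapRelations_succ (hG : QDiffSystem G) (h₀ : EvenLevelRelation G 0) {n : ℕ}
    (h : SwapRelations G n) : SwapRelations G (n+1) := by
  obtain ⟨hP₁, -, hP₂, -, hP₃⟩ := h
  have hH := hG.a_odd_eq_swap n hP₁ hP₂
  have hD := hG.aa_eq_swap n h₀ hP₁ hP₂ hP₃
  have hP₄ := hG.ab_odd_eq_swap n hH hD
  have hB := hG.bb_eq_swap n hH hP₃ hP₄
  exact ⟨hP₃, hD, hP₄, hB, hG.ab_even_eq_swap n hH hD hP₃ hB⟩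

theorem swapRelations_zero (hG : QDiffSystem G)
    (i2 : G (1, Col.a) = 1 + X 0 * X 2)
    (i4 : G (1, Col.b) = 1 + X 0 * X 2 + X 1 * X 2)
    (i5 : G (2, Col.ab) = 1 + X 0 * X 2 + X 1 * X 2 + X 0 * X 1 * X 2 ^ 2)
    (i6 : G (2, Col.a) = 1 + X 0 * X 2 + X 1 * X 2 + X 0 * X 1 * X 2 ^ 2 + X 0 * X 2 ^ 2)
    (i7 : G (3, Col.aa) = 1 + X 0 * X 2 + X 1 * X 2 + X 0 * X 1 * X 2 ^ 2 + X 0 * X 2 ^ 2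
      + X 0 ^ 2 * X 2 ^ 3)
    (i8 : G (2, Col.b) = 1 + X 0 * X 2 + X 1 * X 2 + X 0 * X 1 * X 2 ^ 2 + X 0 * X 2 ^ 2
      + X 0 ^ 2 * X 2 ^ 3 + X 1 * X 2 ^ 2 + X 0 * X 1 * X 2 ^ 3) :
    SwapRelations G 0 := by
  have sA₁ := congrArg swapSub i2
  have sB₁ := congrArg swapSub i4
  have sE₂ := congrArg swapSub i5
  have sA₂ := congrArg swapSub i6
  have sB₂ := congrArg swapSub i8
  have s₁ := congrArg swapSub (hG.eq1 0)
  have s₂ := congrArg swapSub (hG.eq2 0)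
  simp only [mul_assoc, swapSub_add, swapSub_one, swapSub_X_mul, swapSub_X_pow_mul, swapSub_X,
    swapSub_X_pow, swapImage] at sA₁ sB₁ sE₂ sA₂ sB₂ s₁ s₂
  have hB : G (3, Col.bb) = (1 + X 0 * X 2) * swapSub (G (2, Col.b)) := by
    linear_combination hG.eq3 0 + hG.eq2 0 + hG.eq1 0 + i8 + X 0 * X 2 ^ 3 * i5 +
      (X 1 ^ 2 * X 2 ^ 3 + X 0 * X 1 * X 2 ^ 3) * i2 - (1 + X 0 * X 2) * sB₂
  refine ⟨?_, ?_, ?_, hB, ?_⟩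
  · linear_combination i5 - (1 + X 0 * X 2) * sA₁
  · linear_combination i7 - (1 + X 0 * X 2) * sB₁
  · linear_combination hG.eq1 0 + i8 + X 0 * X 1 * X 2 ^ 3 * i2 - (1 + X 0 * X 2) * sA₂
  · linear_combination hG.eq5 0 + hG.eq4 0 + hB - (1 + X 0 * X 2) * (s₂ + s₁) +
      (X 0 * X 1 * X 2 ^ 4 + X 1 * X 2 ^ 3) * i6 + X 0 * X 1 ^ 2 * X 2 ^ 6 * i2 -
      (1 + X 0 * X 2) * (X 1 * X 2 ^ 3 * sE₂ + X 0 * X 1 * X 2 ^ 4 * sA₁)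

end QDiffSystem

theorem key_proposition_general (G : ℕ × Col → MvPowerSeries (Fin 3) ℚ)
    (eq1 : ∀ k : ℕ, 1 ≤ k → G (2*k+1, Col.ab) =
      G (2*k, Col.b) + X 0 * X 1 * X 2 ^ (2*k+1) * G (2*k-1, Col.a))
    (eq2 : ∀ k : ℕ, 1 ≤ k → G (2*k+1, Col.a) =
      G (2*k+1, Col.ab) + X 0 * X 2 ^ (2*k+1) * G (2*k, Col.ab))
    (eq3 : ∀ k : ℕ, 1 ≤ k → G (2*k+1, Col.bb) =
      G (2*k+1, Col.a) + X 1 ^ 2 * X 2 ^ (2*k+1) * G (2*k-1, Col.a))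
    (eq4 : ∀ k : ℕ, 1 ≤ k → G (2*k+1, Col.b) =
      G (2*k+1, Col.bb) + X 1 * X 2 ^ (2*k+1) * G (2*k, Col.a))
    (eq5 : ∀ k : ℕ, 1 ≤ k → G (2*k+2, Col.ab) =
      G (2*k+1, Col.b) + X 0 * X 1 * X 2 ^ (2*k+2) * G (2*k, Col.a) +
      X 0 * X 1 ^ 2 * X 2 ^ (4*k+2) * G (2*k-1, Col.a))
    (eq6 : ∀ k : ℕ, 1 ≤ k → G (2*k+2, Col.a) =
      G (2*k+2, Col.ab) + X 0 * X 2 ^ (2*k+2) * G (2*k, Col.a) +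
      X 0 * X 1 * X 2 ^ (4*k+2) * G (2*k-1, Col.a))
    (eq7 : ∀ k : ℕ, 1 ≤ k → G (2*k+3, Col.aa) =
      G (2*k+2, Col.a) + X 0 ^ 2 * X 2 ^ (2*k+3) * G (2*k, Col.a) +
      X 0 ^ 2 * X 1 * X 2 ^ (4*k+3) * G (2*k-1, Col.a))
    (eq8 : ∀ k : ℕ, 1 ≤ k → G (2*k+2, Col.b) =
      G (2*k+3, Col.aa) + X 1 * X 2 ^ (2*k+2) * G (2*k+1, Col.a))
    (i2 : G (1, Col.a) = 1 + X 0 * X 2)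
    (i4 : G (1, Col.b) = 1 + X 0 * X 2 + X 1 * X 2)
    (i5 : G (2, Col.ab) = 1 + X 0 * X 2 + X 1 * X 2 + X 0 * X 1 * X 2 ^ 2)
    (i6 : G (2, Col.a) = 1 + X 0 * X 2 + X 1 * X 2 + X 0 * X 1 * X 2 ^ 2 + X 0 * X 2 ^ 2)
    (i7 : G (3, Col.aa) = 1 + X 0 * X 2 + X 1 * X 2 + X 0 * X 1 * X 2 ^ 2 + X 0 * X 2 ^ 2
      + X 0 ^ 2 * X 2 ^ 3)
    (i8 : G (2, Col.b) = 1 + X 0 * X 2 + X 1 * X 2 + X 0 * X 1 * X 2 ^ 2 + X 0 * X 2 ^ 2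
      + X 0 ^ 2 * X 2 ^ 3 + X 1 * X 2 ^ 2 + X 0 * X 1 * X 2 ^ 3) :
    ∀ k : ℕ, 1 ≤ k →
      G (2*k+1, Col.ab) = (1 + X 0 * X 2) * swapSub (G (2*k, Col.a)) ∧
      G (2*k+1, Col.bb) = (1 + X 0 * X 2) * swapSub (G (2*k, Col.b)) ∧
      G (2*k+2, Col.ab) = (1 + X 0 * X 2) * swapSub (G (2*k+1, Col.a)) ∧
      G (2*k+1, Col.aa) = (1 + X 0 * X 2) * swapSub (G (2*k-1, Col.b)) := by
  have hG : QDiffSystem G :=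
    ⟨fun n => eq1 (n+1) n.succ_pos, fun n => eq2 (n+1) n.succ_pos,
      fun n => eq3 (n+1) n.succ_pos, fun n => eq4 (n+1) n.succ_pos,
      fun n => eq5 (n+1) n.succ_pos, fun n => eq6 (n+1) n.succ_pos,
      fun n => eq7 (n+1) n.succ_pos, fun n => eq8 (n+1) n.succ_pos⟩
  have h₀ := evenLevelRelation_zero i2 i5 i6 i8
  have hS : ∀ n, SwapRelations G n := by
    intro n
    induction n with
    | zero => exact hG.swapRelations_zero i2 i4 i5 i6 i7 i8
    | succ n ih => exact hG.swapRelations_succ h₀ ih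
  intro k hk
  obtain ⟨n, rfl⟩ := Nat.exists_eq_add_of_le' hk
  obtain ⟨-, hD, hA, hB, hC⟩ := hS n
  exact ⟨hA, hB, hC, hD⟩

/-- Proposition 2.1: any family of formal power series indexed by coloured integers
satisfying the q-difference equations (eq1)-(eq8) and the initial conditions
satisfies the four key functional equations. -/
theorem key_proposition (G : ℕ × Col → MvPowerSeries (Fin 3) ℚ)
    (eq1 : ∀ k : ℕ, 1 ≤ k → G (2*k+1, Col.ab) =
      G (2*k, Col.b) + X 0 * X 1 * X 2 ^ (2*k+1) * G (2*k-1, Col.a))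
    (eq2 : ∀ k : ℕ, 1 ≤ k → G (2*k+1, Col.a) =
      G (2*k+1, Col.ab) + X 0 * X 2 ^ (2*k+1) * G (2*k, Col.ab))
    (eq3 : ∀ k : ℕ, 1 ≤ k → G (2*k+1, Col.bb) =
      G (2*k+1, Col.a) + X 1 ^ 2 * X 2 ^ (2*k+1) * G (2*k-1, Col.a))
    (eq4 : ∀ k : ℕ, 1 ≤ k → G (2*k+1, Col.b) =
      G (2*k+1, Col.bb) + X 1 * X 2 ^ (2*k+1) * G (2*k, Col.a))
    (eq5 : ∀ k : ℕ, 1 ≤ k → G (2*k+2, Col.ab) =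
      G (2*k+1, Col.b) + X 0 * X 1 * X 2 ^ (2*k+2) * G (2*k, Col.a) +
      X 0 * X 1 ^ 2 * X 2 ^ (4*k+2) * G (2*k-1, Col.a))
    (eq6 : ∀ k : ℕ, 1 ≤ k → G (2*k+2, Col.a) =
      G (2*k+2, Col.ab) + X 0 * X 2 ^ (2*k+2) * G (2*k, Col.a) +
      X 0 * X 1 * X 2 ^ (4*k+2) * G (2*k-1, Col.a))
    (eq7 : ∀ k : ℕ, 1 ≤ k → G (2*k+3, Col.aa) =
      G (2*k+2, Col.a) + X 0 ^ 2 * X 2 ^ (2*k+3) * G (2*k, Col.a) +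
      X 0 ^ 2 * X 1 * X 2 ^ (4*k+3) * G (2*k-1, Col.a))
    (eq8 : ∀ k : ℕ, 1 ≤ k → G (2*k+2, Col.b) =
      G (2*k+3, Col.aa) + X 1 * X 2 ^ (2*k+2) * G (2*k+1, Col.a))
    (i1 : G (1, Col.ab) = 1)
    (i2 : G (1, Col.a) = 1 + X 0 * X 2)
    (i3 : G (1, Col.bb) = 1 + X 0 * X 2)
    (i4 : G (1, Col.b) = 1 + X 0 * X 2 + X 1 * X 2)
    (i5 : G (2, Col.ab) = 1 + X 0 * X 2 + X 1 * X 2 + X 0 * X 1 * X 2 ^ 2)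
    (i6 : G (2, Col.a) = 1 + X 0 * X 2 + X 1 * X 2 + X 0 * X 1 * X 2 ^ 2 + X 0 * X 2 ^ 2)
    (i7 : G (3, Col.aa) = 1 + X 0 * X 2 + X 1 * X 2 + X 0 * X 1 * X 2 ^ 2 + X 0 * X 2 ^ 2
      + X 0 ^ 2 * X 2 ^ 3)
    (i8 : G (2, Col.b) = 1 + X 0 * X 2 + X 1 * X 2 + X 0 * X 1 * X 2 ^ 2 + X 0 * X 2 ^ 2
      + X 0 ^ 2 * X 2 ^ 3 + X 1 * X 2 ^ 2 + X 0 * X 1 * X 2 ^ 3) :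
    ∀ k : ℕ, 1 ≤ k →
      G (2*k+1, Col.ab) = (1 + X 0 * X 2) * swapSub (G (2*k, Col.a)) ∧
      G (2*k+1, Col.bb) = (1 + X 0 * X 2) * swapSub (G (2*k, Col.b)) ∧
      G (2*k+2, Col.ab) = (1 + X 0 * X 2) * swapSub (G (2*k+1, Col.a)) ∧
      G (2*k+1, Col.aa) = (1 + X 0 * X 2) * swapSub (G (2*k-1, Col.b)) :=
  key_proposition_general G eq1 eq2 eq3 eq4 eq5 eq6 eq7 eq8 i2 i4 i5 i6 i7 i8
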